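/- arXiv:1801.09852 — 5 statements merged into one kernel-verified Lean document; each statement's English description precedes it below -/
import Mathlib

section
/- Let R be a graded ring with R_0 = k a field of characteristic 0 that has enough derivations, let E be a set of homogeneous elements of R_+ whose images in R_+/R_+^2 are k-linearly independent and suppose E ∖ {x} is algebraically independent with x homogeneous. Then no relation 0 = Σ_{i=0}^n a_i x^i with a_i in the subalgebra generated by E ∖ {x} and a_n ≠ 0 can hold; i.e., E is algebraically independent. -/
/-!
Fix `x ∈ E` of degree `d > 0` and let `C` be the subalgebra generated by the homogeneous elements
of degree in `(0, d)` and by the elements of `E \ {x}` of degree at most `d`. Then `C` is graded,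
it is stable under every homogeneous derivation `D` of negative degree, and `D x ∈ C`.

Suppose `x` is algebraic over `C`. Give `X` the weight `d` and take a relation `∑ bᵢ xⁱ = 0` over
`C` that is homogeneous of minimal degree `N`. Applying `D` of degree `-e` gives the relation
`∑ (D bᵢ + (i + 1) bᵢ₊₁ D x) xⁱ = 0` of degree `N - e`, so all its coefficients vanish. Since `R`
has enough derivations, the leading coefficient `bₙ` is then a nonzero constant, and
`bₙ₋₁ + n bₙ x` has degree `d` and is killed by every `D`, so it is zero and `x ∈ C`.
But every element of `C` of degree `d` lies in `span (E \ {x}) + R₊²`, which contradicts the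
linear independence of `E` in `R₊/R₊²`. Adjoining the elements of a finite subset of `E` in order
of increasing degree now shows that `E` is algebraically independent.
-/

/-- A derivation `D` on a graded algebra is homogeneous of negative degree `-e` (with `e > 0`)
if it sends elements of degree `m` to elements of degree `m - e` (and to `0` when `m < e`). -/
def IsHomogeneousNegDerivation {k R : Type*} [CommRing k] [CommRing R] [Algebra k R]
    (𝒜 : ℕ → Submodule k R) (D : Derivation k R R) (e : ℕ) : Prop :=
  0 < e ∧ ∀ (m : ℕ) (y : R), y ∈ 𝒜 m →
    (if e ≤ m then D y ∈ 𝒜 (m - e) else D y = 0)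

/-- `R` has enough derivations. -/
def HasEnoughDerivations {k R : Type*} [CommRing k] [CommRing R] [Algebra k R]
    (𝒜 : ℕ → Submodule k R) : Prop :=
  ∀ (x : R) (n : ℕ), 0 < n → x ∈ 𝒜 n → x ≠ 0 →
    ∃ (D : Derivation k R R) (e : ℕ), IsHomogeneousNegDerivation 𝒜 D e ∧ D x ≠ 0

open Polynomial DirectSum

namespace Derivation

variable {k R : Type*} [CommRing k] [CommRing R] [Algebra k R]

/-- `pᴰ + p' · D x`, where `pᴰ` applies `D` to the coefficients of `p`. -/
noncomputable def derivedPoly (D : Derivation k R R) (x : R) (p : R[X]) : R[X] :=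
  PolynomialModule.equivPolynomialSelf (D.mapCoeffs p) + derivative p * C (D x)

theorem coeff_derivedPoly (D : Derivation k R R) (x : R) (p : R[X]) (i : ℕ) :
    (D.derivedPoly x p).coeff i = D (p.coeff i) + (i + 1) • (p.coeff (i + 1) * D x) := by
  rw [derivedPoly, coeff_add, coeff_mul_C, coeff_derivative, nsmul_eq_mul, Nat.cast_succ]
  congr 1
  ring

theorem eval_derivedPoly (D : Derivation k R R) (x : R) (p : R[X]) :
    (D.derivedPoly x p).eval x = D (p.eval x) := by
  rw [D.apply_eval_eq, derivedPoly, eval_add, eval_mul, eval_C, smul_eq_mul]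
  congr 1
  induction D.mapCoeffs p using PolynomialModule.induction_linear with
  | zero => simp
  | add f g hf hg => rw [map_add, eval_add, map_add, hf, hg]
  | single n a => simp [PolynomialModule.eval_single, mul_comm]

theorem map_mem_adjoin (D : Derivation k R R) {S : Set R}
    (hS : ∀ s ∈ S, D s ∈ Algebra.adjoin k S) {a : R} (ha : a ∈ Algebra.adjoin k S) :
    D a ∈ Algebra.adjoin k S := by
  induction ha using Algebra.adjoin_induction with
  | mem s hs => exact hS s hs
  | algebraMap r => simp
  | add a b _ _ iha ihb => simpa using add_mem iha ihb
  | mul a b ha hb iha ihb =>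
    rw [leibniz, smul_eq_mul, smul_eq_mul]
    exact add_mem (mul_mem ha ihb) (mul_mem hb iha)

end Derivation

section Derivations

variable {k R : Type*} [CommRing k] [CommRing R] [Algebra k R] {𝒜 : ℕ → Submodule k R}

namespace IsHomogeneousNegDerivation

variable {D : Derivation k R R} {e m : ℕ} {y : R}

theorem map_mem (hD : IsHomogeneousNegDerivation 𝒜 D e) (hy : y ∈ 𝒜 m) : D y ∈ 𝒜 (m - e) := by
  have h := hD.2 m y hy
  split_ifs at h
  exacts [h, h ▸ zero_mem _]

theorem map_eq_zero (hD : IsHomogeneousNegDerivation 𝒜 D e) (hy : y ∈ 𝒜 m) (hm : m < e) :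
    D y = 0 := by
  simpa [if_neg hm.not_ge] using hD.2 m y hy

end IsHomogeneousNegDerivation

theorem HasEnoughDerivations.eq_zero (hED : HasEnoughDerivations 𝒜) {m : ℕ} {y : R}
    (hy : y ∈ 𝒜 m) (hm : 0 < m) (h : ∀ D e, IsHomogeneousNegDerivation 𝒜 D e → D y = 0) :
    y = 0 := by
  by_contra hy0
  obtain ⟨D, e, hD, hDy⟩ := hED y m hm hy hy0
  exact hDy (h D e hD)

end Derivations

theorem isHomogeneous_adjoin {k R : Type*} [CommRing k] [CommRing R] [Algebra k R]
    {𝒜 : ℕ → Submodule k R} [GradedAlgebra 𝒜] {S : Set R}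
    (hS : ∀ s ∈ S, SetLike.IsHomogeneousElem 𝒜 s) :
    SetLike.IsHomogeneous 𝒜 (Algebra.adjoin k S) := by
  refine IsHomogeneous.subsemiringClosure_of_isHomogeneousElem (𝒜 := 𝒜)
    (s := Set.range (algebraMap k R) ∪ S) ?_
  rintro _ (⟨r, rfl⟩ | hs)
  exacts [⟨0, SetLike.algebraMap_mem_graded 𝒜 r⟩, hS _ hs]

section HomogeneousRelation

variable {k R : Type*} [CommRing k] [CommRing R] [Algebra k R] (𝒜 : ℕ → Submodule k R)

/-- `p` is a nonzero relation `p(x) = 0` over `C` that is homogeneous of degree `N` when `X` is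
given the weight `d`. -/
structure IsHomogeneousRelation (C : Subalgebra k R) (x : R) (d N : ℕ) (p : R[X]) : Prop where
  ne_zero : p ≠ 0
  eval_eq_zero : p.eval x = 0
  coeff_mem : ∀ i, p.coeff i ∈ C
  coeff_mem_graded : ∀ i, p.coeff i ∈ 𝒜 (N - i * d)
  coeff_eq_zero : ∀ i, N < i * d → p.coeff i = 0

variable {𝒜} {C : Subalgebra k R} {x : R} {d N : ℕ} {p : R[X]}

namespace IsHomogeneousRelation

theorem natDegree_pos (hp : IsHomogeneousRelation 𝒜 C x d N p) : 0 < p.natDegree := by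
  by_contra! h
  have hC := eq_C_of_natDegree_eq_zero (Nat.le_zero.1 h)
  have h0 := hp.eval_eq_zero
  rw [hC, eval_C] at h0
  exact hp.ne_zero (by rw [hC, h0, map_zero])

theorem natDegree_mul_le (hp : IsHomogeneousRelation 𝒜 C x d N p) : p.natDegree * d ≤ N := by
  by_contra! h
  exact leadingCoeff_ne_zero.2 hp.ne_zero (hp.coeff_eq_zero _ h)

theorem pos (hp : IsHomogeneousRelation 𝒜 C x d N p) (hd : 0 < d) : 0 < N :=
  lt_of_lt_of_le (Nat.mul_pos hp.natDegree_pos hd) hp.natDegree_mul_le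

end IsHomogeneousRelation

variable [GradedAlgebra 𝒜]

variable (𝒜) in
noncomputable def weightedComponent (d N : ℕ) (p : R[X]) : R[X] :=
  ∑ i ∈ p.support, monomial i (if i * d ≤ N then (decompose 𝒜 (p.coeff i) (N - i * d) : R) else 0)

theorem coeff_weightedComponent (p : R[X]) (i : ℕ) :
    (weightedComponent 𝒜 d N p).coeff i =
      if i * d ≤ N then (decompose 𝒜 (p.coeff i) (N - i * d) : R) else 0 := by
  simp only [weightedComponent, finsetSum_coeff, coeff_monomial, Finset.sum_ite_eq']
  split_ifs <;> simp_all

theorem eval_weightedComponent (hx : x ∈ 𝒜 d) (p : R[X]) :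
    (weightedComponent 𝒜 d N p).eval x = decompose 𝒜 (p.eval x) N := by
  rw [weightedComponent, eval_finsetSum, eval_eq_sum, Polynomial.sum_def, decompose_sum,
    DFinsupp.finsetSum_apply, AddSubmonoidClass.coe_finsetSum]
  refine Finset.sum_congr rfl fun i _ => ?_
  have hxi : x ^ i ∈ 𝒜 (i * d) := by simpa using SetLike.pow_mem_graded i hx
  rw [eval_monomial]
  split_ifs with h
  · exact (coe_decompose_mul_of_right_mem_of_le 𝒜 hxi h).symm
  · rw [zero_mul, coe_decompose_mul_of_right_mem_of_not_le 𝒜 hxi h]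

theorem exists_isHomogeneousRelation (hC : SetLike.IsHomogeneous 𝒜 C) (hx : x ∈ 𝒜 d)
    (hp : p ≠ 0) (hpC : ∀ i, p.coeff i ∈ C) (hpx : p.eval x = 0) :
    ∃ N q, IsHomogeneousRelation 𝒜 C x d N q := by
  classical
  obtain ⟨M, hM⟩ : ∃ M, (decompose 𝒜 p.leadingCoeff M : R) ≠ 0 := by
    by_contra! h
    apply leadingCoeff_ne_zero.2 hp
    rw [← sum_support_decompose 𝒜 p.leadingCoeff]
    exact Finset.sum_eq_zero fun i _ => h i
  refine ⟨M + p.natDegree * d, weightedComponent 𝒜 d (M + p.natDegree * d) p,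
    ⟨fun h => hM ?_, ?_, fun i => ?_, fun i => ?_, fun i hi => ?_⟩⟩
  · have := congrArg (coeff · p.natDegree) h
    simp only [coeff_weightedComponent, le_add_self, if_true, coeff_zero] at this
    rwa [Nat.add_sub_cancel] at this
  · rw [eval_weightedComponent hx, hpx, decompose_zero, DirectSum.zero_apply,
      ZeroMemClass.coe_zero]
  · rw [coeff_weightedComponent]
    split_ifs
    exacts [hC _ (hpC i), zero_mem _]
  · rw [coeff_weightedComponent]
    split_ifs
    exacts [SetLike.coe_mem _, zero_mem _]
  · rw [coeff_weightedComponent, if_neg (not_le.2 hi)]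

namespace IsHomogeneousRelation

theorem derivedPoly (hp : IsHomogeneousRelation 𝒜 C x d N p) (hx : x ∈ 𝒜 d)
    {D : Derivation k R R} {e : ℕ} (hD : IsHomogeneousNegDerivation 𝒜 D e)
    (hCD : ∀ a ∈ C, D a ∈ C) (hDx : D x ∈ C) (hq : D.derivedPoly x p ≠ 0) :
    IsHomogeneousRelation 𝒜 C x d (N - e) (D.derivedPoly x p) := by
  refine ⟨hq, by rw [D.eval_derivedPoly, hp.eval_eq_zero, map_zero], fun i => ?_, fun i => ?_,
    fun i hi => ?_⟩ <;> rw [D.coeff_derivedPoly]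
  · exact add_mem (hCD _ (hp.coeff_mem i)) (nsmul_mem (mul_mem (hp.coeff_mem _) hDx) _)
  · refine add_mem ?_ (nsmul_mem ?_ _)
    · simpa [Nat.sub_right_comm] using hD.map_mem (hp.coeff_mem_graded i)
    · by_cases hi : (i + 1) * d ≤ N
      · by_cases he : e ≤ d
        · convert SetLike.mul_mem_graded (hp.coeff_mem_graded (i + 1)) (hD.map_mem hx) using 2
          rw [add_mul, one_mul] at hi ⊢
          omega
        · simp [hD.map_eq_zero hx (not_le.1 he)]
      · simp [hp.coeff_eq_zero _ (not_le.1 hi)]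
  · have h1 : D (p.coeff i) = 0 := by
      by_cases h : i * d ≤ N
      · exact hD.map_eq_zero (hp.coeff_mem_graded i) (by omega)
      · rw [hp.coeff_eq_zero i (not_le.1 h), map_zero]
    have h2 : p.coeff (i + 1) * D x = 0 := by
      by_cases h : (i + 1) * d ≤ N
      · rw [hD.map_eq_zero hx (by rw [add_mul, one_mul] at h; omega), mul_zero]
      · rw [hp.coeff_eq_zero _ (not_le.1 h), zero_mul]
    rw [h1, h2, smul_zero, add_zero]

end IsHomogeneousRelation

end HomogeneousRelation

section AlgebraicOverStableSubalgebra

variable {k R : Type*} [Field k] [CharZero k] [CommRing R] [Algebra k R]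
  {𝒜 : ℕ → Submodule k R} [GradedAlgebra 𝒜]
  {C : Subalgebra k R} {x : R} {d : ℕ}

theorem IsHomogeneousRelation.mem_of_forall_derivedPoly_eq_zero {N : ℕ} {p : R[X]}
    (h0 : ∀ y ∈ 𝒜 0, ∃ c : k, algebraMap k R c = y) (hED : HasEnoughDerivations 𝒜)
    (hp : IsHomogeneousRelation 𝒜 C x d N p) (hx : x ∈ 𝒜 d) (hd : 0 < d)
    (h : ∀ D e, IsHomogeneousNegDerivation 𝒜 D e → D.derivedPoly x p = 0) : x ∈ C := by
  have hrec : ∀ D e, IsHomogeneousNegDerivation 𝒜 D e →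
      ∀ i, D (p.coeff i) + (i + 1) • (p.coeff (i + 1) * D x) = 0 := fun D e hD i => by
    rw [← D.coeff_derivedPoly, h D e hD, coeff_zero]
  have hn := hp.natDegree_pos
  have hnN := hp.natDegree_mul_le
  have hlc : p.coeff p.natDegree ≠ 0 := leadingCoeff_ne_zero.2 hp.ne_zero
  have hsucc : p.coeff (p.natDegree + 1) = 0 := coeff_eq_zero_of_natDegree_lt (Nat.lt_succ_self _)
  generalize p.natDegree = n at *
  have hlead : ∀ D e, IsHomogeneousNegDerivation 𝒜 D e → D (p.coeff n) = 0 := fun D e hD => by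
    simpa [hsucc] using hrec D e hD n
  have hN : N = n * d := by
    by_contra hN
    exact hlc <| hED.eq_zero (hp.coeff_mem_graded n) (by omega) hlead
  obtain ⟨κ, hκ⟩ := h0 _ (by simpa [hN] using hp.coeff_mem_graded n)
  have hnκ : (n : k) * κ ≠ 0 := by
    refine mul_ne_zero (Nat.cast_ne_zero.2 hn.ne') ?_
    rintro rfl
    exact hlc (by rw [← hκ, map_zero])
  set z := p.coeff (n - 1) + n • (p.coeff n * x)
  have hz : z ∈ 𝒜 d := by
    refine add_mem ?_ (nsmul_mem ?_ _)
    · convert hp.coeff_mem_graded (n - 1) using 2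
      rw [hN, Nat.sub_one_mul]
      have : d ≤ n * d := Nat.le_mul_of_pos_left d hn
      omega
    · simpa [← hκ] using SetLike.mul_mem_graded (SetLike.algebraMap_mem_graded 𝒜 κ) hx
  have hDz : ∀ D e, IsHomogeneousNegDerivation 𝒜 D e → D z = 0 := fun D e hD => by
    have := hrec D e hD (n - 1)
    rw [Nat.sub_add_cancel hn] at this
    simpa [z, hlead D e hD] using this
  have hxC : x = -((n : k) * κ)⁻¹ • p.coeff (n - 1) := by
    have : n • (p.coeff n * x) = ((n : k) * κ) • x := by
      rw [← hκ, nsmul_eq_mul, Algebra.smul_def, map_mul, map_natCast, mul_assoc]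
    rw [eq_neg_of_add_eq_zero_left (hED.eq_zero hz hd hDz), this, smul_neg, neg_smul, neg_neg,
      smul_smul, inv_mul_cancel₀ hnκ, one_smul]
  rw [hxC]
  exact C.smul_mem (hp.coeff_mem _) _

theorem mem_of_eval_eq_zero
    (h0 : ∀ y ∈ 𝒜 0, ∃ c : k, algebraMap k R c = y) (hED : HasEnoughDerivations 𝒜)
    (hC : SetLike.IsHomogeneous 𝒜 C)
    (hCD : ∀ D e, IsHomogeneousNegDerivation 𝒜 D e → ∀ a ∈ C, D a ∈ C)
    (hx : x ∈ 𝒜 d) (hd : 0 < d) (hDx : ∀ D e, IsHomogeneousNegDerivation 𝒜 D e → D x ∈ C)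
    {p : R[X]} (hp : p ≠ 0) (hpC : ∀ i, p.coeff i ∈ C) (hpx : p.eval x = 0) : x ∈ C := by
  classical
  have hex := exists_isHomogeneousRelation hC hx hp hpC hpx
  obtain ⟨q, hq⟩ := Nat.find_spec hex
  refine hq.mem_of_forall_derivedPoly_eq_zero h0 hED hx hd fun D e hD => ?_
  by_contra hne
  exact Nat.find_min hex (Nat.sub_lt (hq.pos hd) hD.1)
    ⟨_, hq.derivedPoly hx hD (hCD D e hD) (hDx D e hD) hne⟩

end AlgebraicOverStableSubalgebra

theorem Algebra.toSubmodule_adjoin_le_span_insert_one_sup {k R : Type*} [CommRing k]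
    [CommRing R] [Algebra k R] {I : Ideal R} {S : Set R} (hS : S ⊆ I) :
    Subalgebra.toSubmodule (Algebra.adjoin k S) ≤
      Submodule.span k (insert 1 S) ⊔ (I * I).restrictScalars k := by
  set N := Submodule.span k S ⊔ (I * I).restrictScalars k
  have hNI : N ≤ I.restrictScalars k :=
    sup_le (Submodule.span_le.2 hS) (Submodule.restrictScalars_mono k Ideal.mul_le_left)
  rw [Submodule.span_insert, sup_assoc]
  let A : Subalgebra k R := (k ∙ (1 : R) ⊔ N).toSubalgebra
    (Submodule.mem_sup_left (Submodule.mem_span_singleton_self 1)) fun {a b} ha hb => by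
      obtain ⟨_, hα, a', ha', rfl⟩ := Submodule.mem_sup.1 ha
      obtain ⟨_, hβ, b', hb', rfl⟩ := Submodule.mem_sup.1 hb
      obtain ⟨α, rfl⟩ := Submodule.mem_span_singleton.1 hα
      obtain ⟨β, rfl⟩ := Submodule.mem_span_singleton.1 hβ
      have hab : a' * b' ∈ N := Submodule.mem_sup_right (Ideal.mul_mem_mul (hNI ha') (hNI hb'))
      have : (α • (1 : R) + a') * (β • 1 + b') = (α * β) • 1 + (α • b' + β • a' + a' * b') := by
        simp only [Algebra.smul_def, map_mul]; ring
      rw [this]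
      exact Submodule.add_mem_sup (Submodule.mem_span_singleton.2 ⟨_, rfl⟩)
        (add_mem (add_mem (N.smul_mem α hb') (N.smul_mem β ha')) hab)
  intro a ha
  refine Algebra.adjoin_le (S := A) (fun s hs => ?_) ha
  exact Submodule.mem_sup_right (Submodule.mem_sup_left (Submodule.subset_span hs))

section LowDegreeAdjoin

variable {k R : Type*} [CommRing k] [CommRing R] [Algebra k R]

def lowDegreeGenerators (𝒜 : ℕ → Submodule k R) (d : ℕ) (t : Set R) : Set R :=
  {r | ∃ m, 0 < m ∧ m < d ∧ r ∈ 𝒜 m} ∪ t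

def lowDegreeAdjoin (𝒜 : ℕ → Submodule k R) (d : ℕ) (t : Set R) : Subalgebra k R :=
  Algebra.adjoin k (lowDegreeGenerators 𝒜 d t)

variable {𝒜 : ℕ → Submodule k R} {d : ℕ} {t : Set R}

theorem exists_degree_of_mem_lowDegreeGenerators (ht : ∀ y ∈ t, ∃ m, 0 < m ∧ m ≤ d ∧ y ∈ 𝒜 m)
    {g : R} (hg : g ∈ lowDegreeGenerators 𝒜 d t) : ∃ m, 0 < m ∧ m ≤ d ∧ g ∈ 𝒜 m :=
  hg.elim (fun ⟨m, hm, hmd, hg⟩ => ⟨m, hm, hmd.le, hg⟩) (ht g)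

theorem mem_lowDegreeAdjoin_of_lt (h0 : ∀ y ∈ 𝒜 0, ∃ c : k, algebraMap k R c = y)
    {m : ℕ} {y : R} (hy : y ∈ 𝒜 m) (hm : m < d) : y ∈ lowDegreeAdjoin 𝒜 d t := by
  rcases Nat.eq_zero_or_pos m with rfl | hm0
  · obtain ⟨c, rfl⟩ := h0 y hy
    exact Subalgebra.algebraMap_mem _ c
  · exact Algebra.subset_adjoin (Or.inl ⟨m, hm0, hm, hy⟩)

theorem map_mem_lowDegreeAdjoin (h0 : ∀ y ∈ 𝒜 0, ∃ c : k, algebraMap k R c = y)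
    (ht : ∀ y ∈ t, ∃ m, 0 < m ∧ m ≤ d ∧ y ∈ 𝒜 m) {D : Derivation k R R} {e : ℕ}
    (hD : IsHomogeneousNegDerivation 𝒜 D e) {a : R} (ha : a ∈ lowDegreeAdjoin 𝒜 d t) :
    D a ∈ lowDegreeAdjoin 𝒜 d t := by
  refine D.map_mem_adjoin (fun g hg => ?_) ha
  obtain ⟨m, hm, hmd, hgm⟩ := exists_degree_of_mem_lowDegreeGenerators ht hg
  exact mem_lowDegreeAdjoin_of_lt h0 (hD.map_mem hgm) (by have := hD.1; omega)

variable [GradedAlgebra 𝒜]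

theorem isHomogeneous_lowDegreeAdjoin (ht : ∀ y ∈ t, ∃ m, 0 < m ∧ m ≤ d ∧ y ∈ 𝒜 m) :
    SetLike.IsHomogeneous 𝒜 (lowDegreeAdjoin 𝒜 d t) :=
  isHomogeneous_adjoin fun _ hg =>
    (exists_degree_of_mem_lowDegreeGenerators ht hg).imp fun _ h => h.2.2

theorem exists_sub_mem_mul_of_mem_lowDegreeAdjoin
    (ht : ∀ y ∈ t, ∃ m, 0 < m ∧ m ≤ d ∧ y ∈ 𝒜 m) (hd : 0 < d)
    {a : R} (ha : a ∈ lowDegreeAdjoin 𝒜 d t) (had : a ∈ 𝒜 d) :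
    ∃ u ∈ Submodule.span k t, a - u ∈
      Ideal.span {x : R | ∃ n, 0 < n ∧ x ∈ 𝒜 n} * Ideal.span {x : R | ∃ n, 0 < n ∧ x ∈ 𝒜 n} := by
  set I := Ideal.span {x : R | ∃ n, 0 < n ∧ x ∈ 𝒜 n}
  have hI : I.IsHomogeneous 𝒜 := Ideal.homogeneous_span 𝒜 _ fun y ⟨n, _, hy⟩ => ⟨n, hy⟩
  have hgens : lowDegreeGenerators 𝒜 d t ⊆ I := fun g hg => by
    obtain ⟨m, hm, -, hgm⟩ := exists_degree_of_mem_lowDegreeGenerators ht hg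
    exact Ideal.subset_span ⟨m, hm, hgm⟩
  obtain ⟨s, hs, q, hq, rfl⟩ :=
    Submodule.mem_sup.1 (Algebra.toSubmodule_adjoin_le_span_insert_one_sup hgens ha)
  refine ⟨decompose 𝒜 s d, ?_, ?_⟩
  · have hproj : ∀ g ∈ insert 1 (lowDegreeGenerators 𝒜 d t),
        GradedAlgebra.proj 𝒜 d g ∈ Submodule.span k t := by
      rintro _ (rfl | ⟨m, -, hmd, hgm⟩ | hgt) <;> rw [GradedAlgebra.proj_apply]
      · rw [decompose_of_mem_ne 𝒜 SetLike.GradedOne.one_mem hd.ne]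
        exact zero_mem _
      · rw [decompose_of_mem_ne 𝒜 hgm hmd.ne]
        exact zero_mem _
      · obtain ⟨m, -, -, hgm⟩ := ht _ hgt
        by_cases hmd : m = d
        · rw [← hmd, decompose_of_mem_same 𝒜 hgm]
          exact Submodule.subset_span hgt
        · rw [decompose_of_mem_ne 𝒜 hgm hmd]
          exact zero_mem _
    exact (Submodule.map_span_le _ _ _).2 hproj ⟨s, hs, rfl⟩
  · rw [← decompose_of_mem_same 𝒜 had, decompose_add, DirectSum.add_apply, Submodule.coe_add,
      add_sub_cancel_left]
    exact (hI.mul hI) d hq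

end LowDegreeAdjoin

theorem sub_notMem_of_linearIndependent {k R : Type*} [Field k] [CommRing R] [Algebra k R]
    {Q : Ideal R} {E : Set R} (hli : LinearIndependent k fun y : E => Ideal.Quotient.mk Q (y : R))
    {x u : R} (hx : x ∈ E) (hu : u ∈ Submodule.span k (E \ {x})) : x - u ∉ Q := by
  intro h
  apply LinearIndepOn.notMem_span (v := Ideal.Quotient.mk Q) hli hx
  rw [Ideal.Quotient.eq.2 h]
  exact Submodule.apply_mem_span_image_of_mem_span (Ideal.Quotient.mkₐ k Q).toLinearMap hu

theorem Transcendental.sum_mul_pow_ne_zero {k R : Type*} [CommRing k] [CommRing R] [Algebra k R]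
    {A : Subalgebra k R} {x : R} (h : Transcendental A x) {n : ℕ} {a : ℕ → R}
    (ha : ∀ i, a i ∈ A) (han : a n ≠ 0) : ∑ i ∈ Finset.range (n + 1), a i * x ^ i ≠ 0 := by
  intro hsum
  let p : A[X] := ∑ i ∈ Finset.range (n + 1), monomial i ⟨a i, ha i⟩
  refine h ⟨p, fun hp => han ?_, ?_⟩
  · have := congrArg (coeff · n) hp
    simp only [p, finsetSum_coeff, coeff_monomial] at this
    simpa using congrArg Subtype.val this
  · simpa [p, aeval_monomial, mul_comm] using hsum

section Independence

variable {k R : Type*} [Field k] [CharZero k] [CommRing R] [Algebra k R]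
  {𝒜 : ℕ → Submodule k R} [GradedAlgebra 𝒜]

theorem transcendental_adjoin_of_degree_le
    (h0 : ∀ y ∈ 𝒜 0, ∃ c : k, algebraMap k R c = y) (hED : HasEnoughDerivations 𝒜) {E : Set R}
    (hli : LinearIndependent k fun y : E =>
      Ideal.Quotient.mk (Ideal.span {x : R | ∃ n, 0 < n ∧ x ∈ 𝒜 n} *
        Ideal.span {x : R | ∃ n, 0 < n ∧ x ∈ 𝒜 n}) (y : R))
    {x : R} (hx : x ∈ E) {d : ℕ} (hd : 0 < d) (hxd : x ∈ 𝒜 d) {t : Set R} (ht : t ⊆ E \ {x})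
    (htd : ∀ y ∈ t, ∃ m, 0 < m ∧ m ≤ d ∧ y ∈ 𝒜 m) :
    Transcendental (Algebra.adjoin k t) x := by
  rintro ⟨p, hp, hpx⟩
  have hle : Algebra.adjoin k t ≤ lowDegreeAdjoin 𝒜 d t :=
    Algebra.adjoin_mono Set.subset_union_right
  have hxC : x ∈ lowDegreeAdjoin 𝒜 d t :=
    mem_of_eval_eq_zero h0 hED (isHomogeneous_lowDegreeAdjoin htd)
      (fun D e hD a ha => map_mem_lowDegreeAdjoin h0 htd hD ha) hxd hd
      (fun D e hD => mem_lowDegreeAdjoin_of_lt h0 (hD.map_mem hxd) (Nat.sub_lt hd hD.1))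
      (p := p.map (algebraMap _ R)) ((Polynomial.map_ne_zero_iff Subtype.val_injective).2 hp)
      (fun i => by rw [coeff_map]; exact hle (p.coeff i).2) (by rwa [eval_map, ← aeval_def])
  obtain ⟨u, hu, hxu⟩ := exists_sub_mem_mul_of_mem_lowDegreeAdjoin htd hd hxC hxd
  exact sub_notMem_of_linearIndependent hli hx (Submodule.span_mono ht hu) hxu

theorem algebraicIndependent_of_linearIndependent [Nontrivial R]
    (h0 : ∀ y ∈ 𝒜 0, ∃ c : k, algebraMap k R c = y) (hED : HasEnoughDerivations 𝒜) {E : Set R}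
    (hE : ∀ y ∈ E, ∃ n, 0 < n ∧ y ∈ 𝒜 n)
    (hli : LinearIndependent k fun y : E =>
      Ideal.Quotient.mk (Ideal.span {x : R | ∃ n, 0 < n ∧ x ∈ 𝒜 n} *
        Ideal.span {x : R | ∃ n, 0 < n ∧ x ∈ 𝒜 n}) (y : R)) :
    AlgebraicIndependent k ((↑) : E → R) := by
  classical
  choose! deg hdeg using hE
  refine algebraicIndependent_of_finite E fun t htE ht => ?_
  obtain ⟨F, rfl⟩ := ht.exists_finset_coe
  clear ht
  induction F using Finset.induction_on_max_value deg with
  | empty => simpa using algebraicIndependent_empty (K := k) (A := R)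
  | insert a F haF hmax ih =>
    rw [Finset.coe_insert] at htE ⊢
    have hFE : (F : Set R) ⊆ E := (Set.subset_insert _ _).trans htE
    have haE : a ∈ E := htE (Set.mem_insert _ _)
    refine AlgebraicIndepOn.insert (x := id) (ih hFE) ?_
    rw [Set.image_id]
    exact transcendental_adjoin_of_degree_le h0 hED hli haE (hdeg a haE).1 (hdeg a haE).2
      (fun y hy => ⟨hFE hy, ne_of_mem_of_not_mem hy haF⟩)
      (fun y hy => ⟨deg y, (hdeg y (hFE hy)).1, hmax y hy, (hdeg y (hFE hy)).2⟩)

end Independence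

theorem stmt1_general
    {k R : Type*} [Field k] [CharZero k] [CommRing R] [Algebra k R]
    (𝒜 : ℕ → Submodule k R) [GradedAlgebra 𝒜]
    (h0 : ∀ x ∈ 𝒜 0, ∃ c : k, algebraMap k R c = x)
    (hED : HasEnoughDerivations 𝒜)
    (Rp : Ideal R) (hRp : Rp = Ideal.span {x : R | ∃ n, 0 < n ∧ x ∈ 𝒜 n})
    (E : Set R)
    -- the elements of `E` are homogeneous of positive degree:
    (hE : ∀ y ∈ E, ∃ n, 0 < n ∧ y ∈ 𝒜 n)
    -- the images of the elements of `E` in `R₊/R₊²` are `k`-linearly independent: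
    (hli : LinearIndependent k fun y : E => Ideal.Quotient.mk (Rp * Rp) (y : R))
    (x : R) (hx : x ∈ E) :
    -- no nontrivial polynomial relation `∑ aᵢ xⁱ = 0` with coefficients in the subalgebra
    -- generated by `E \ {x}` can hold . . .
    (∀ (n : ℕ) (a : ℕ → R), (∀ i, a i ∈ Algebra.adjoin k (E \ {x})) → a n ≠ 0 →
      ∑ i ∈ Finset.range (n + 1), a i * x ^ i ≠ 0) ∧
    -- . . . i.e. `E` is algebraically independent:
    AlgebraicIndependent k ((↑) : E → R) := by
  subst hRp
  have hx0 : Ideal.Quotient.mk _ x ≠ 0 := hli.ne_zero ⟨x, hx⟩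
  have : Nontrivial R := ⟨x, 0, by rintro rfl; exact hx0 (map_zero _)⟩
  have hind := algebraicIndependent_of_linearIndependent h0 hED hE hli
  refine ⟨fun n a ha han => ?_, hind⟩
  have hins : AlgebraicIndepOn k id (insert x (E \ {x})) := by
    rwa [Set.insert_sdiff_singleton, Set.insert_eq_of_mem hx]
  have htr := ((AlgebraicIndepOn.insert_iff fun h => h.2 rfl).1 hins).2
  rw [Set.image_id] at htr
  exact htr.sum_mul_pow_ne_zero ha han

theorem stmt1
    {k R : Type*} [Field k] [CharZero k] [CommRing R] [Algebra k R]
    (𝒜 : ℕ → Submodule k R) [GradedAlgebra 𝒜]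
    (h0 : ∀ x ∈ 𝒜 0, ∃ c : k, algebraMap k R c = x)
    (hED : HasEnoughDerivations 𝒜)
    (Rp : Ideal R) (hRp : Rp = Ideal.span {x : R | ∃ n, 0 < n ∧ x ∈ 𝒜 n})
    (E : Set R)
    -- the elements of `E` are homogeneous of positive degree:
    (hE : ∀ y ∈ E, ∃ n, 0 < n ∧ y ∈ 𝒜 n)
    -- the images of the elements of `E` in `R₊/R₊²` are `k`-linearly independent:
    (hli : LinearIndependent k fun y : E => Ideal.Quotient.mk (Rp * Rp) (y : R))
    (x : R) (hx : x ∈ E)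
    -- `E \ {x}` is algebraically independent:
    (hAI : AlgebraicIndependent k ((↑) : (E \ {x} : Set R) → R)) :
    -- no nontrivial polynomial relation `∑ aᵢ xⁱ = 0` with coefficients in the subalgebra
    -- generated by `E \ {x}` can hold . . .
    (∀ (n : ℕ) (a : ℕ → R), (∀ i, a i ∈ Algebra.adjoin k (E \ {x})) → a n ≠ 0 →
      ∑ i ∈ Finset.range (n + 1), a i * x ^ i ≠ 0) ∧
    -- . . . i.e. `E` is algebraically independent:
    AlgebraicIndependent k ((↑) : E → R) :=
  stmt1_general 𝒜 h0 hED Rp hRp E hE hli x hx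
end

section
/- Let R be a k-algebra over a field k of characteristic p > 0, let ∂^• be a Hasse derivation on R, and let q be a power of p. Then for any x ∈ R and n ∈ ℕ, ∂^n(x^q) equals (∂^{n/q}(x))^q if q divides n, and equals 0 otherwise. -/
/-!
The Hasse derivation packages into a ring homomorphism `x ↦ ∑ ∂ⁿ(x) Xⁿ` from `R` to `R⟦X⟧`:
the higher Leibniz rule is exactly multiplicativity. Since `R` is a nonzero `k`-algebra, it has
characteristic `p`, and in characteristic `p` raising a power series to the power `q = pᵉ`
raises every coefficient to the power `q` and substitutes `X ↦ X^q`. Comparing coefficients of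
`Xⁿ` gives the formula.
-/

/-- A Hasse derivation on a `k`-algebra `R`: a sequence of `k`-linear endomorphisms
`∂^n` with `∂^0 = id` satisfying the higher Leibniz rule. -/
structure HasseDerivation (k R : Type*) [CommRing k] [CommRing R] [Algebra k R] where
  d : ℕ → R →ₗ[k] R
  d_zero : d 0 = LinearMap.id
  leibniz : ∀ (n : ℕ) (x y : R),
    d n (x * y) = ∑ ij ∈ Finset.HasAntidiagonal.antidiagonal n, d ij.1 x * d ij.2 y

open PowerSeries

theorem PowerSeries.map_iterateFrobenius_expand {R : Type*} [CommRing R] (p : ℕ) [ExpChar R p]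
    (f : R⟦X⟧) (e : ℕ) :
    map (iterateFrobenius R p e) (expand (p ^ e) (pow_ne_zero e (expChar_ne_zero R p)) f) =
      f ^ p ^ e :=
  MvPowerSeries.map_iterateFrobenius_expand p (expChar_ne_zero R p) f e

theorem PowerSeries.coeff_pow_expChar_pow {R : Type*} [CommRing R] (p : ℕ) [ExpChar R p]
    (f : R⟦X⟧) (e n : ℕ) :
    coeff n (f ^ p ^ e) = if p ^ e ∣ n then coeff (n / p ^ e) f ^ p ^ e else 0 := by
  rw [← map_iterateFrobenius_expand, coeff_map, coeff_expand, iterateFrobenius_def]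
  split_ifs
  · rfl
  · exact zero_pow (pow_ne_zero e (expChar_ne_zero R p))

namespace HasseDerivation

variable {k R : Type*} [CommRing k] [CommRing R] [Algebra k R] (D : HasseDerivation k R)

theorem d_zero_apply (x : R) : D.d 0 x = x := by
  rw [D.d_zero, LinearMap.id_apply]

noncomputable def series (x : R) : R⟦X⟧ :=
  PowerSeries.mk fun n => D.d n x

@[simp]
theorem coeff_series (x : R) (n : ℕ) : coeff n (D.series x) = D.d n x :=
  coeff_mk _ _

theorem series_mul (x y : R) : D.series (x * y) = D.series x * D.series y := by
  ext n
  simp only [coeff_mul, coeff_series, D.leibniz]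

-- `series 1` is an idempotent with constant coefficient `1`, hence a unit, hence `1`.
theorem series_one : D.series 1 = 1 := by
  have hunit : IsUnit (D.series 1) := by
    rw [isUnit_iff_constantCoeff, ← coeff_zero_eq_constantCoeff_apply, coeff_series,
      d_zero_apply]
    exact isUnit_one
  have hidem := D.series_mul 1 1
  rw [mul_one] at hidem
  exact hunit.mul_eq_left.mp hidem.symm

noncomputable def toPowerSeries : R →+* R⟦X⟧ where
  toFun := D.series
  map_one' := D.series_one
  map_mul' := D.series_mul
  map_zero' := by ext; simp
  map_add' x y := by ext; simp

theorem coeff_toPowerSeries (x : R) (n : ℕ) : coeff n (D.toPowerSeries x) = D.d n x :=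
  D.coeff_series x n

theorem d_pow_expChar_pow (p : ℕ) [ExpChar R p] (e : ℕ) (x : R) (n : ℕ) :
    D.d n (x ^ p ^ e) = if p ^ e ∣ n then D.d (n / p ^ e) x ^ p ^ e else 0 := by
  have h := congr_arg (coeff n) (map_pow D.toPowerSeries x (p ^ e))
  rwa [coeff_pow_expChar_pow, coeff_toPowerSeries, coeff_toPowerSeries] at h

end HasseDerivation

theorem stmt2 {k R : Type*} [Field k] [CommRing R] [Algebra k R]
    (p : ℕ) [hp : Fact p.Prime] [CharP k p]
    (D : HasseDerivation k R) (e : ℕ) (q : ℕ) (hq : q = p ^ e)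
    (x : R) (n : ℕ) :
    D.d n (x ^ q) = if q ∣ n then (D.d (n / q) x) ^ q else 0 := by
  nontriviality R
  have : ExpChar R p := expChar_of_injective_algebraMap (algebraMap k R).injective p
  subst hq
  exact D.d_pow_expChar_pow p e x n
end

section
/- Let A ⊆ B be a flat integral extension of commutative rings. For any ideal I of B with I ≠ B, the codimension (height) of I in B equals the codimension of A ∩ I in A. -/
/-!
Contraction `Q ↦ Q ∩ A` preserves the height of primes: lifting chains by going down (which
flat algebras enjoy) gives `ht (Q ∩ A) ≤ ht Q`, and incomparability for integral extensions
makes contraction strictly monotone, giving `ht Q ≤ ht (Q ∩ A)`. By lying over, the primes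
of `A` containing `I ∩ A` are exactly the contractions of the primes of `B` containing `I`,
so the two infima defining the codimensions run over the same values.
-/

/-- The codimension (height) of an ideal: the infimum of the heights of the primes
containing it (`⊤` if there is no prime of finite height containing it). -/
noncomputable def Ideal.codim {R : Type*} [CommRing R] (I : Ideal R) : ℕ∞ :=
  ⨅ p ∈ {p : PrimeSpectrum R | I ≤ p.asIdeal}, Order.height p

open PrimeSpectrum

section
variable {A B : Type*} [CommRing A] [CommRing B] [Algebra A B]

lemma PrimeSpectrum.height_comap_le_of_hasGoingDown [Algebra.HasGoingDown A B]
    (Q : PrimeSpectrum B) : Order.height (comap (algebraMap A B) Q) ≤ Order.height Q := by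
  rw [Order.height_eq_iSup_last_eq]
  refine iSup₂_le fun l hl => ?_
  have : Q.asIdeal.LiesOver l.last.asIdeal := ⟨by rw [hl]; rfl⟩
  obtain ⟨L, hlen, hlast, -⟩ := Ideal.exists_ltSeries_of_hasGoingDown l Q.asIdeal
  rw [← hlen, ← show L.last = Q from hlast]
  exact Order.length_le_height_last

lemma PrimeSpectrum.height_le_height_comap_of_isIntegral [Algebra.IsIntegral A B]
    (Q : PrimeSpectrum B) : Order.height Q ≤ Order.height (comap (algebraMap A B) Q) :=
  Order.height_le_height_apply_of_strictMono (comap (algebraMap A B))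
    (fun _ _ h => Ideal.IsIntegral.comap_lt_comap (R := A) h) Q

lemma PrimeSpectrum.height_comap_of_isIntegral_of_hasGoingDown [Algebra.IsIntegral A B]
    [Algebra.HasGoingDown A B] (Q : PrimeSpectrum B) :
    Order.height (comap (algebraMap A B) Q) = Order.height Q :=
  (height_comap_le_of_hasGoingDown Q).antisymm (height_le_height_comap_of_isIntegral Q)

lemma PrimeSpectrum.image_comap_setOf_le_asIdeal_of_isIntegral [Algebra.IsIntegral A B]
    (I : Ideal B) :
    comap (algebraMap A B) '' {Q | I ≤ Q.asIdeal} = {p | I.comap (algebraMap A B) ≤ p.asIdeal} := by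
  ext p
  refine ⟨?_, fun hp => ?_⟩
  · rintro ⟨Q, hQ, rfl⟩
    exact Ideal.comap_mono hQ
  · obtain ⟨Q, hIQ, hQ, hQp⟩ := Ideal.exists_ideal_over_prime_of_isIntegral p.asIdeal I hp
    exact ⟨⟨Q, hQ⟩, hIQ, PrimeSpectrum.ext hQp⟩

end

theorem stmt7_general {A B : Type*} [CommRing A] [CommRing B] [Algebra A B]
    -- flat integral extension:
    [Module.Flat A B] [Algebra.IsIntegral A B]
    (I : Ideal B) :
    I.codim = (I.comap (algebraMap A B)).codim := by
  simp only [Ideal.codim, ← image_comap_setOf_le_asIdeal_of_isIntegral, iInf_image,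
    height_comap_of_isIntegral_of_hasGoingDown]

theorem stmt7 {A B : Type*} [CommRing A] [CommRing B] [Algebra A B]
    -- `A ⊆ B`:
    (hinj : Function.Injective (algebraMap A B))
    -- flat integral extension:
    [Module.Flat A B] [Algebra.IsIntegral A B]
    (I : Ideal B) (hI : I ≠ ⊤) :
    I.codim = (I.comap (algebraMap A B)).codim :=
  stmt7_general I
end

section
/- Let A be a finitely generated algebra over a field k and let U be a (possibly infinite) set of variables. Every prime ideal of the polynomial ring A[U] of finite codimension is finitely generated; moreover it is extended from A[V] for some finite subset V ⊆ U. -/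
/-!
For a finite set `V ⊆ U` let `P_V` be the extension to `A[U]` of `P ∩ A[V]`. Since
`A[U] = A[V][U \ V]`, each `P_V` is prime; the `P_V` increase with `V`, and every element of `P`
lies in some `P_V`. If no `P_V` were all of `P`, they would form chains of primes below `P` of
arbitrary length, so `P` would have infinite height. Hence `P = P_V` for some `V`, and `P ∩ A[V]`
is finitely generated by the Hilbert basis theorem, as `A` is noetherian.
-/

theorem Order.height_eq_top_of_forall_exists_lt {α ι : Type*} [Preorder α] [Nonempty ι]
    {f : ι → α} {x : α} (hfx : ∀ i, f i < x) (hf : ∀ i, ∃ j, f i < f j) : height x = ⊤ := by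
  have h_unbounded : ∀ n : ℕ, ∃ i, (n : ℕ∞) ≤ height (f i) := by
    intro n
    induction n with
    | zero => exact ⟨Classical.arbitrary ι, by simp⟩
    | succ n ih =>
      obtain ⟨i, hi⟩ := ih
      obtain ⟨j, hij⟩ := hf i
      exact ⟨j, by push_cast; exact (add_le_add_left hi 1).trans (height_add_one_le hij)⟩
  refine ENat.eq_top_iff_forall_ge.2 fun n => ?_
  obtain ⟨i, hi⟩ := h_unbounded n
  exact hi.trans (height_mono (hfx i).le)

theorem Ideal.codim_eq_height {R : Type*} [CommRing R] (P : Ideal R) [hP : P.IsPrime] :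
    P.codim = Order.height (⟨P, hP⟩ : PrimeSpectrum R) := by
  refine le_antisymm (iInf₂_le (⟨P, hP⟩ : PrimeSpectrum R) le_rfl) (le_iInf₂ fun q hq => ?_)
  exact Order.height_mono (show (⟨P, hP⟩ : PrimeSpectrum R) ≤ q from hq)

namespace MvPolynomial

theorem isPrime_map_C {R σ : Type*} [CommRing R] (Q : Ideal R) [Q.IsPrime] :
    (Q.map (C : R →+* MvPolynomial σ R)).IsPrime := by
  rw [← Ideal.mk_ker (I := Q), ← ker_map]
  exact RingHom.ker_isPrime _

theorem isPrime_map_rename {R σ τ : Type*} [CommRing R] {g : σ → τ}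
    (hg : Function.Injective g) (Q : Ideal (MvPolynomial σ R)) [Q.IsPrime] :
    (Q.map (rename g : MvPolynomial σ R →ₐ[R] MvPolynomial τ R)).IsPrime := by
  classical
  let κ := {t // t ∉ Set.range g}
  let e : κ ⊕ σ ≃ τ := (Equiv.sumComm κ σ).trans <|
    (Equiv.sumCongr (Equiv.ofInjective g hg) (Equiv.refl κ)).trans
      (Equiv.sumCompl (· ∈ Set.range g))
  -- `rename g` is the inclusion of coefficients `R[σ] → R[σ][τ \ range g]`, up to isomorphism
  let E : MvPolynomial κ (MvPolynomial σ R) ≃+* MvPolynomial τ R :=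
    (sumAlgEquiv R κ σ).symm.toRingEquiv.trans (renameEquiv R e).toRingEquiv
  have h_rename : (rename g : MvPolynomial σ R →ₐ[R] MvPolynomial τ R).toRingHom =
      (E : MvPolynomial κ (MvPolynomial σ R) →+* MvPolynomial τ R).comp C := by
    refine ringHom_ext (fun r => ?_) (fun i => ?_)
    · simp [E, sumAlgEquiv_symm_C_C]
    · change rename g (X i) = rename e ((sumAlgEquiv R κ σ).symm (C (X i)))
      rw [sumAlgEquiv_symm_C_X, rename_X, rename_X]
      rfl
  have : (Q.map (C : MvPolynomial σ R →+* MvPolynomial κ (MvPolynomial σ R))).IsPrime :=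
    isPrime_map_C Q
  change (Q.map (rename g : MvPolynomial σ R →ₐ[R] MvPolynomial τ R).toRingHom).IsPrime
  rw [h_rename, ← Ideal.map_map]
  exact Ideal.map_isPrime_of_equiv E

end MvPolynomial

open MvPolynomial

section ExtendedIdeal

variable {A U : Type*} [CommRing A] (P : Ideal (MvPolynomial U A))

noncomputable def extendedIdeal (V : Finset U) : Ideal (MvPolynomial U A) :=
  (P.comap (rename ((↑) : V → U) : MvPolynomial V A →ₐ[A] MvPolynomial U A)).map
    (rename ((↑) : V → U) : MvPolynomial V A →ₐ[A] MvPolynomial U A)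

theorem extendedIdeal_le (V : Finset U) : extendedIdeal P V ≤ P :=
  Ideal.map_comap_le

instance extendedIdeal_isPrime [P.IsPrime] (V : Finset U) : (extendedIdeal P V).IsPrime :=
  isPrime_map_rename Subtype.val_injective _

theorem rename_subtypeVal_mem_range {V W : Finset U} (h : V ⊆ W) (q : MvPolynomial V A) :
    rename ((↑) : V → U) q ∈ Set.range (rename ((↑) : W → U)) :=
  ⟨rename (fun u : V => (⟨u.1, h u.2⟩ : W)) q, by rw [rename_rename]; rfl⟩

theorem mem_extendedIdeal {V : Finset U} {f : MvPolynomial U A} (hfP : f ∈ P)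
    (hfV : f ∈ Set.range (rename ((↑) : V → U))) : f ∈ extendedIdeal P V := by
  obtain ⟨q, rfl⟩ := hfV
  exact Ideal.mem_map_of_mem _ hfP

theorem extendedIdeal_mono {V W : Finset U} (h : V ⊆ W) : extendedIdeal P V ≤ extendedIdeal P W :=
  Ideal.map_le_iff_le_comap.2 fun q hq => mem_extendedIdeal P hq (rename_subtypeVal_mem_range h q)

theorem exists_extendedIdeal_lt {V : Finset U} (hV : extendedIdeal P V ≠ P) :
    ∃ W, extendedIdeal P V < extendedIdeal P W := by
  classical
  obtain ⟨f, hfP, hfV⟩ := SetLike.exists_of_lt ((extendedIdeal_le P V).lt_of_ne hV)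
  obtain ⟨s, q, rfl⟩ := exists_finset_rename f
  have hfW : rename ((↑) : s → U) q ∈ extendedIdeal P (V ∪ s) :=
    mem_extendedIdeal P hfP (rename_subtypeVal_mem_range Finset.subset_union_right q)
  exact ⟨V ∪ s, (extendedIdeal_mono P Finset.subset_union_left).lt_of_ne fun h => hfV (h ▸ hfW)⟩

theorem exists_extendedIdeal_eq_of_height_ne_top [hP : P.IsPrime]
    (h : Order.height (⟨P, hP⟩ : PrimeSpectrum (MvPolynomial U A)) ≠ ⊤) :
    ∃ V, extendedIdeal P V = P := by
  by_contra! hne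
  exact h <| Order.height_eq_top_of_forall_exists_lt
    (f := fun V => (⟨extendedIdeal P V, inferInstance⟩ : PrimeSpectrum _))
    (fun V => (extendedIdeal_le P V).lt_of_ne (hne V)) (fun V => exists_extendedIdeal_lt P (hne V))

end ExtendedIdeal

theorem stmt8 {k A : Type*} [Field k] [CommRing A] [Algebra k A]
    [Algebra.FiniteType k A] (U : Type*)
    (P : Ideal (MvPolynomial U A)) [P.IsPrime] (hP : P.codim ≠ ⊤) :
    P.FG ∧ ∃ (V : Finset U) (I : Ideal (MvPolynomial {u // u ∈ V} A)),
      P = I.map (MvPolynomial.rename ((↑) : {u // u ∈ V} → U) :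
        MvPolynomial {u // u ∈ V} A →ₐ[A] MvPolynomial U A) := by
  have : IsNoetherianRing A := Algebra.FiniteType.isNoetherianRing k A
  obtain ⟨V, hV⟩ := exists_extendedIdeal_eq_of_height_ne_top P (P.codim_eq_height ▸ hP)
  refine ⟨?_, V, _, hV.symm⟩
  rw [← hV, extendedIdeal]
  exact Ideal.FG.map (IsNoetherian.noetherian _) _
end

section
/- Let A be a finitely generated k-algebra and U a set. If J is a finitely generated ideal of A[U][y], then the contraction A[U] ∩ J is also a finitely generated ideal of A[U]. -/
/-!
The generators of an ideal `K` of `R[τ]` involve only finitely many variables `F`, so under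
`R[τ] ≅ R[F][τ ∖ F]` the ideal `K` is extended from an ideal `K₁` of `R[F]`. Membership in an
ideal extended along `C` is tested coefficientwise, hence the contraction of `K` along an
injective renaming `f : σ → τ` is extended from the contraction of `K₁` to `R[f⁻¹ F]`, which is
finitely generated when `R` is Noetherian. The theorem is the case `σ = U`, `τ = Option U`, with
`A` Noetherian as a finitely generated algebra over a field.
-/

open MvPolynomial

theorem Ideal.map_comap_span_of_subset_range {R S : Type*} [CommSemiring R] [CommSemiring S]
    (φ : R →+* S) {s : Set S} (hs : s ⊆ Set.range φ) :
    ((Ideal.span s).comap φ).map φ = Ideal.span s := by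
  refine le_antisymm Ideal.map_comap_le (Ideal.span_le.mpr fun x hx => ?_)
  obtain ⟨y, rfl⟩ := hs hx
  exact Ideal.mem_map_of_mem φ (Ideal.mem_comap.mpr (Ideal.subset_span hx))

theorem Ideal.FG.comap_ringEquiv {R S : Type*} [CommSemiring R] [CommSemiring S]
    (e : R ≃+* S) {I : Ideal S} (hI : I.FG) : (I.comap e).FG := by
  rw [← Ideal.map_symm]
  exact hI.map (e.symm : S →+* R)

namespace MvPolynomial

section Split

variable (R : Type*) [CommSemiring R] {σ τ : Type*}

noncomputable def sumComplAlgEquiv (p : τ → Prop) [DecidablePred p] :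
    MvPolynomial τ R ≃ₐ[R] MvPolynomial {t // ¬p t} (MvPolynomial {t // p t} R) :=
  (renameEquiv R ((Equiv.sumCompl p).symm.trans (Equiv.sumComm _ _))).trans (sumAlgEquiv R _ _)

variable {R} (p : τ → Prop) [DecidablePred p]

theorem sumComplAlgEquiv_X_of_pos {t : τ} (h : p t) :
    sumComplAlgEquiv R p (X t) = C (X ⟨t, h⟩) := by
  simp [sumComplAlgEquiv, Equiv.sumCompl_symm_apply_of_pos h]

theorem sumComplAlgEquiv_X_of_neg {t : τ} (h : ¬p t) :
    sumComplAlgEquiv R p (X t) = X ⟨t, h⟩ := by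
  simp [sumComplAlgEquiv, Equiv.sumCompl_symm_apply_of_neg h]

theorem sumComplAlgEquiv_rename_val (g : MvPolynomial {t // p t} R) :
    sumComplAlgEquiv R p (rename Subtype.val g) = C g := by
  induction g using MvPolynomial.induction_on with
  | C r => simp [sumComplAlgEquiv]
  | add g h hg hh => simp [hg, hh]
  | mul_X g t hg => simp [hg, sumComplAlgEquiv_X_of_pos p t.2]

theorem sumComplAlgEquiv_rename (f : σ → τ) (q : MvPolynomial σ R) :
    sumComplAlgEquiv R p (rename f q) =
      rename (Subtype.map f fun _ h => h)
        (map (rename (R := R) (Subtype.map f fun _ h => h)).toRingHom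
          (sumComplAlgEquiv R (p ∘ f) q)) := by
  induction q using MvPolynomial.induction_on with
  | C r => simp [sumComplAlgEquiv]
  | add g h hg hh => simp [hg, hh]
  | mul_X g x hg =>
    by_cases h : p (f x)
    · simp [hg, sumComplAlgEquiv_X_of_pos p h, sumComplAlgEquiv_X_of_pos (p ∘ f) h, Subtype.map]
    · simp [hg, sumComplAlgEquiv_X_of_neg p h, sumComplAlgEquiv_X_of_neg (p ∘ f) h, Subtype.map]

end Split

section ExtendedIdeals

variable {R S σ τ : Type*} [CommRing R] [CommRing S]

theorem comap_map_map_C (φ : R →+* S) (I : Ideal S) :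
    (I.map (C : S →+* MvPolynomial σ S)).comap (map φ) = (I.comap φ).map C := by
  ext q
  simp only [Ideal.mem_comap, mem_map_C_iff, coeff_map]

theorem map_C_le_comap_map_C (g : MvPolynomial σ R →ₐ[R] MvPolynomial τ R) (I : Ideal R) :
    I.map C ≤ (I.map C).comap g :=
  Ideal.map_le_iff_le_comap.mpr fun r hr => by
    rw [Ideal.mem_comap, Ideal.mem_comap, algHom_C]
    exact Ideal.mem_map_of_mem C hr

theorem comap_rename_map_C {f : σ → τ} (hf : Function.Injective f) (I : Ideal R) :
    (I.map (C : R →+* MvPolynomial τ R)).comap (rename f) = I.map C :=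
  le_antisymm (fun q hq => by simpa using map_C_le_comap_map_C (killCompl hf) I hq)
    (map_C_le_comap_map_C (rename f) I)

theorem comap_rename_comap_sumComplAlgEquiv {f : σ → τ} (hf : Function.Injective f)
    (p : τ → Prop) [DecidablePred p] (K₁ : Ideal (MvPolynomial {t // p t} R)) :
    ((K₁.map C).comap (sumComplAlgEquiv R p).toRingHom).comap (rename f) =
      ((K₁.comap (rename (Subtype.map f fun _ h => h)).toRingHom).map C).comap
        (sumComplAlgEquiv R (p ∘ f)).toRingEquiv := by
  set f₁ : {x // (p ∘ f) x} → {t // p t} := Subtype.map f fun _ h => h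
  set f₂ : {x // ¬(p ∘ f) x} → {t // ¬p t} := Subtype.map f fun _ h => h
  ext q
  calc sumComplAlgEquiv R p (rename f q) ∈ K₁.map C
      ↔ rename f₂ (map (rename f₁).toRingHom (sumComplAlgEquiv R (p ∘ f) q)) ∈ K₁.map C := by
        rw [sumComplAlgEquiv_rename]
    _ ↔ map (rename f₁).toRingHom (sumComplAlgEquiv R (p ∘ f) q) ∈ K₁.map C := by
        rw [← Ideal.mem_comap (f := rename (R := MvPolynomial {t // p t} R) f₂),
          comap_rename_map_C (Subtype.map_injective _ hf)]
    _ ↔ sumComplAlgEquiv R (p ∘ f) q ∈ (K₁.comap (rename f₁).toRingHom).map C := by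
        rw [← comap_map_map_C (rename f₁).toRingHom K₁, Ideal.mem_comap]

theorem exists_finset_map_sumComplAlgEquiv_eq_map_C [DecidableEq τ] {K : Ideal (MvPolynomial τ R)}
    (hK : K.FG) : ∃ (F : Finset τ) (K₁ : Ideal (MvPolynomial {t // t ∈ F} R)),
      K.map (sumComplAlgEquiv R (· ∈ F)).toRingHom = K₁.map C := by
  obtain ⟨s, rfl⟩ := hK
  refine ⟨s.sup vars, (Ideal.span s).comap (rename Subtype.val).toRingHom, ?_⟩
  have hs : (s : Set (MvPolynomial τ R)) ⊆ Set.range (rename (R := R) Subtype.val).toRingHom :=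
    fun g hg => exists_rename_eq_of_vars_subset_range g _ Subtype.val_injective
      fun t ht => ⟨⟨t, Finset.le_sup (f := vars) hg ht⟩, rfl⟩
  conv_lhs => rw [← Ideal.map_comap_span_of_subset_range _ hs, Ideal.map_map]
  congr 1
  exact RingHom.ext (sumComplAlgEquiv_rename_val _)

end ExtendedIdeals

theorem optionEquivLeft_rename_some {R σ : Type*} [CommSemiring R] (q : MvPolynomial σ R) :
    optionEquivLeft R σ (rename some q) = Polynomial.C q := by
  induction q using MvPolynomial.induction_on with
  | C r => simp [optionEquivLeft_C]
  | add g h hg hh => simp [hg, hh]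
  | mul_X g x hg => simp [hg, optionEquivLeft_X_some]

variable {R σ τ : Type*} [CommRing R] [IsNoetherianRing R]

theorem fg_comap_rename {f : σ → τ} (hf : Function.Injective f) {K : Ideal (MvPolynomial τ R)}
    (hK : K.FG) : (K.comap (rename f)).FG := by
  classical
  obtain ⟨F, K₁, hK₁⟩ := exists_finset_map_sumComplAlgEquiv_eq_map_C hK
  have : Finite {x // ((· ∈ F) ∘ f) x} :=
    Finite.of_injective (Subtype.map f fun _ h => h) (Subtype.map_injective _ hf)
  rw [← Ideal.comap_map_of_bijective (sumComplAlgEquiv R (· ∈ F)).toRingHom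
    (sumComplAlgEquiv R _).bijective (I := K), hK₁,
    comap_rename_comap_sumComplAlgEquiv hf]
  exact (Ideal.FG.map (IsNoetherian.noetherian _) C).comap_ringEquiv _

theorem fg_comap_polynomial_C {J : Ideal (Polynomial (MvPolynomial σ R))} (hJ : J.FG) :
    (J.comap (Polynomial.C : MvPolynomial σ R →+* _)).FG := by
  have hC : J.comap Polynomial.C =
      (J.comap (optionEquivLeft R σ).toRingEquiv).comap (rename some) := by
    ext q
    simp [optionEquivLeft_rename_some]
  rw [hC]
  exact fg_comap_rename (Option.some_injective σ) (hJ.comap_ringEquiv _)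

end MvPolynomial

theorem stmt14 {k A : Type*} [Field k] [CommRing A] [Algebra k A]
    [Algebra.FiniteType k A] (U : Type*)
    (J : Ideal (Polynomial (MvPolynomial U A))) (hJ : J.FG) :
    (J.comap (Polynomial.C : MvPolynomial U A →+* Polynomial (MvPolynomial U A))).FG := by
  have : IsNoetherianRing A := Algebra.FiniteType.isNoetherianRing k A
  exact MvPolynomial.fg_comap_polynomial_C hJ
end
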